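/- The number of weighted Motzkin paths of length n with up-step weight 1, horizontal-step weights b_0 = 1 and b_k = 2 for k ≥ 1, and down-step weights λ_k = 1 for all k ≥ 1, equals the Catalan number C_n. -/

import Mathlib

open Finset

/-- Steps for Schröder paths: `U = (1,1)`, `D = (1,-1)`, `H = (2,0)`. -/
inductive SStep | U | D | H
deriving DecidableEq

/-- The total horizontal length of a Schröder path. -/
def xlen (l : List SStep) : ℕ :=
  (l.map (fun s => match s with | .H => 2 | _ => 1)).sum

/-- The final height of a Schröder path. -/
def sht (l : List SStep) : ℤ :=
  (l.map (fun s => match s with | .U => 1 | .D => -1 | .H => 0)).sum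

/-- A little Schröder path of length `2n`: from `(0,0)` to `(2n,0)` with steps
`(1,1)`, `(1,-1)`, `(2,0)`, never below the x-axis, no `(2,0)` step on the x-axis. -/
def IsLittleSchroederPath (n : ℕ) (l : List SStep) : Prop :=
  xlen l = 2 * n ∧ sht l = 0 ∧ (∀ p, p <+: l → 0 ≤ sht p) ∧
  ∀ p, p ++ [SStep.H] <+: l → 0 < sht p

/-- The `n`-th little Schröder number (A001003), as the number of little
Schröder paths of length `2n`. -/
noncomputable def littleSchroeder (n : ℕ) : ℕ :=
  Set.ncard {l : List SStep | IsLittleSchroederPath n l}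

/-- Steps for Motzkin paths. -/
inductive MStep | up | down | flat
deriving DecidableEq

instance : Fintype MStep :=
  ⟨{MStep.up, MStep.down, MStep.flat}, fun x => by cases x <;> simp⟩

/-- The height of a Motzkin path `f` of length `m` after `i` steps. -/
def mht {m : ℕ} (f : Fin m → MStep) (i : ℕ) : ℤ :=
  ∑ j : Fin m, if (j : ℕ) < i then
    (match f j with | .up => 1 | .down => -1 | .flat => 0) else 0

/-- `f` is a Motzkin path: it stays weakly above the x-axis and ends at height 0. -/
def IsMotzkinPath {m : ℕ} (f : Fin m → MStep) : Prop :=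
  (∀ i, 0 ≤ mht f i) ∧ mht f m = 0

/-- The `n`-th Motzkin number, as the number of Motzkin paths of length `n`. -/
noncomputable def motzkin (n : ℕ) : ℕ :=
  Set.ncard {f : Fin n → MStep | IsMotzkinPath f}

/-- The weight of the path `f`, where up steps have weight 1, a horizontal step
at height `h` has weight `b h`, and a down step starting at height `h` has
weight `lam h`. -/
def mweight {m : ℕ} (b lam : ℕ → ℕ) (f : Fin m → MStep) : ℕ :=
  ∏ j : Fin m, match f j with
    | .up => 1
    | .flat => b (mht f (j : ℕ)).toNat
    | .down => lam (mht f (j : ℕ)).toNat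

open Classical in
/-- The total weight of all weighted Motzkin paths of length `m`
(the `m`-th moment for the recurrence coefficients `b`, `lam`). -/
noncomputable def moment (b lam : ℕ → ℕ) (m : ℕ) : ℕ :=
  ∑ f ∈ Finset.univ.filter (fun f : Fin m → MStep => IsMotzkinPath f),
    mweight b lam f

open Classical in
/-- The total weight of all weighted Dyck paths (Motzkin paths with no
horizontal steps) of length `m`, where a down step starting at height `h` has
weight `lam h`. -/
noncomputable def dyckMoment (lam : ℕ → ℕ) (m : ℕ) : ℕ :=
  ∑ f ∈ Finset.univ.filter
      (fun f : Fin m → MStep => IsMotzkinPath f ∧ ∀ j, f j ≠ MStep.flat),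
    mweight (fun _ => 1) lam f

/-!
Let `μ n k = prefixMoment b λ n k` be the total weight of the paths of length `n` that stay
weakly above the axis and end at height `k`. Removing the last step gives
`μ (n+1) k = μ n (k-1) + b_k μ n k + λ_{k+1} μ n (k+1)`. For `b = (1, 2, 2, …)` and `λ ≡ 1`,
Pascal's rule applied twice shows that the ballot numbers `C(2n, n+k) - C(2n, n+k+1)` satisfy
the same recurrence with the same initial values, so `μ n 0 = C(2n, n) - C(2n, n+1) = C_n`.
-/

namespace MStep

def height : MStep → ℤ
  | up => 1
  | down => -1
  | flat => 0

def weight (b lam : ℕ → ℕ) (h : ℤ) : MStep → ℕ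
  | up => 1
  | flat => b h.toNat
  | down => lam h.toNat

theorem sum_univ {M : Type*} [AddCommMonoid M] (F : MStep → M) :
    ∑ s, F s = F up + F down + F flat := by
  change ∑ s ∈ {up, down, flat}, F s = _
  simp [add_assoc]

end MStep

section Paths

variable {n m : ℕ}

theorem mht_eq_sum_height (f : Fin m → MStep) (i : ℕ) :
    mht f i = ∑ j : Fin m, if (j : ℕ) < i then (f j).height else 0 := by
  refine Finset.sum_congr rfl fun j _ => ?_
  cases f j <;> rfl

theorem mweight_eq_prod_weight (b lam : ℕ → ℕ) (f : Fin m → MStep) :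
    mweight b lam f = ∏ j, (f j).weight b lam (mht f j) := by
  refine Finset.prod_congr rfl fun j _ => ?_
  cases f j <;> rfl

theorem mht_of_length_le (f : Fin m → MStep) {i : ℕ} (h : m ≤ i) : mht f i = mht f m := by
  simp only [mht_eq_sum_height]
  refine Finset.sum_congr rfl fun j _ => ?_
  rw [if_pos (j.isLt.trans_le h), if_pos j.isLt]

theorem mht_snoc_of_le (g : Fin n → MStep) (s : MStep) {i : ℕ} (h : i ≤ n) :
    mht (Fin.snoc g s : Fin (n + 1) → MStep) i = mht g i := by
  simp only [mht_eq_sum_height, Fin.sum_univ_castSucc, Fin.val_castSucc, Fin.snoc_castSucc,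
    Fin.val_last, Fin.snoc_last, if_neg (not_lt.2 h), add_zero]

theorem mht_snoc_length (g : Fin n → MStep) (s : MStep) :
    mht (Fin.snoc g s : Fin (n + 1) → MStep) (n + 1) = mht g n + s.height := by
  rw [← mht_of_length_le g n.le_succ]
  simp only [mht_eq_sum_height, Fin.sum_univ_castSucc, Fin.val_castSucc, Fin.snoc_castSucc,
    Fin.val_last, Fin.snoc_last, if_pos n.lt_succ_self]

theorem mweight_snoc (b lam : ℕ → ℕ) (g : Fin n → MStep) (s : MStep) :
    mweight b lam (Fin.snoc g s : Fin (n + 1) → MStep) =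
      mweight b lam g * s.weight b lam (mht g n) := by
  simp only [mweight_eq_prod_weight, Fin.prod_univ_castSucc, Fin.val_castSucc,
    Fin.snoc_castSucc, Fin.val_last, Fin.snoc_last, mht_snoc_of_le g s le_rfl]
  congr 1
  exact Finset.prod_congr rfl fun j _ => by rw [mht_snoc_of_le g s j.isLt.le]

def IsMotzkinPrefix (f : Fin m → MStep) : Prop :=
  ∀ i, 0 ≤ mht f i

theorem isMotzkinPrefix_snoc_iff (g : Fin n → MStep) (s : MStep) :
    IsMotzkinPrefix (Fin.snoc g s : Fin (n + 1) → MStep) ↔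
      IsMotzkinPrefix g ∧ 0 ≤ mht g n + s.height := by
  constructor
  · intro h
    refine ⟨fun i => ?_, mht_snoc_length g s ▸ h (n + 1)⟩
    rcases le_total i n with hi | hi
    · exact mht_snoc_of_le g s hi ▸ h i
    · exact mht_of_length_le g hi ▸ mht_snoc_of_le g s le_rfl ▸ h n
  · rintro ⟨hg, hn⟩ i
    rcases le_or_gt i n with hi | hi
    · exact mht_snoc_of_le g s hi ▸ hg i
    · rwa [mht_of_length_le _ hi, mht_snoc_length]

end Paths

open Classical in
noncomputable def prefixMoment (b lam : ℕ → ℕ) (m : ℕ) (k : ℤ) : ℕ :=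
  ∑ f : Fin m → MStep, if IsMotzkinPrefix f ∧ mht f m = k then mweight b lam f else 0

section PrefixMoment

variable (b lam : ℕ → ℕ) {n : ℕ} {k : ℤ}

theorem moment_eq_prefixMoment_zero : moment b lam n = prefixMoment b lam n 0 := by
  rw [moment, prefixMoment, Finset.sum_filter]
  exact Finset.sum_congr rfl fun f _ => by congr

theorem prefixMoment_zero : prefixMoment b lam 0 k = if k = 0 then 1 else 0 := by
  simp [prefixMoment, IsMotzkinPrefix, mht, mweight, eq_comm]

theorem prefixMoment_of_neg (hk : k < 0) : prefixMoment b lam n k = 0 :=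
  Finset.sum_eq_zero fun _ _ => if_neg fun ⟨hf, hfk⟩ => hk.not_ge (hfk ▸ hf n)

open Classical in
theorem prefixMoment_succ_eq_sum (hk : 0 ≤ k) :
    prefixMoment b lam (n + 1) k =
      ∑ s : MStep, s.weight b lam (k - s.height) * prefixMoment b lam n (k - s.height) := by
  rw [prefixMoment, ← (Fin.snocEquiv fun _ => MStep).sum_comp, Fintype.sum_prod_type]
  refine Finset.sum_congr rfl fun s _ => ?_
  rw [prefixMoment, Finset.mul_sum]
  refine Finset.sum_congr rfl fun g _ => ?_
  have hiff : (IsMotzkinPrefix (Fin.snoc g s : Fin (n + 1) → MStep) ∧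
      mht (Fin.snoc g s : Fin (n + 1) → MStep) (n + 1) = k) ↔
      IsMotzkinPrefix g ∧ mht g n = k - s.height := by
    rw [isMotzkinPrefix_snoc_iff, mht_snoc_length]
    constructor
    · rintro ⟨⟨hg, -⟩, h⟩
      exact ⟨hg, by omega⟩
    · rintro ⟨hg, h⟩
      exact ⟨⟨hg, by omega⟩, by omega⟩
  refine (if_congr hiff rfl rfl).trans ?_
  split_ifs with hg
  · exact (mweight_snoc b lam g s).trans (by rw [hg.2, mul_comm])
  · rw [mul_zero]

theorem prefixMoment_succ (hk : 0 ≤ k) :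
    prefixMoment b lam (n + 1) k = prefixMoment b lam n (k - 1) +
      b k.toNat * prefixMoment b lam n k + lam (k + 1).toNat * prefixMoment b lam n (k + 1) := by
  simp only [prefixMoment_succ_eq_sum b lam hk, MStep.sum_univ, MStep.weight, MStep.height,
    one_mul, sub_neg_eq_add, sub_zero]
  ring

end PrefixMoment

theorem Nat.choose_add_two_add_two (m j : ℕ) :
    (m + 2).choose (j + 2) = m.choose j + 2 * m.choose (j + 1) + m.choose (j + 2) := by
  rw [Nat.choose_succ_succ', Nat.choose_succ_succ', Nat.choose_succ_succ' m (j + 1)]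
  ring

theorem catalan_add_choose_succ (n : ℕ) :
    catalan n + (2 * n).choose (n + 1) = (2 * n).choose n := by
  have hcat := succ_mul_catalan_eq_centralBinom n
  have hsucc := Nat.choose_succ_right_eq (2 * n) n
  rw [show 2 * n - n = n by omega] at hsucc
  rw [Nat.centralBinom_eq_two_mul_choose] at hcat
  refine Nat.eq_of_mul_eq_mul_left n.succ_pos ?_
  calc (n + 1) * (catalan n + (2 * n).choose (n + 1))
      = (n + 1) * catalan n + (2 * n).choose (n + 1) * (n + 1) := by ring
    _ = (n + 1) * (2 * n).choose n := by rw [hcat, hsucc]; ring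

theorem prefixMoment_add_choose (n k : ℕ) :
    prefixMoment (fun k => if k = 0 then 1 else 2) (fun _ => 1) n k +
      (2 * n).choose (n + k + 1) = (2 * n).choose (n + k) := by
  induction n generalizing k with
  | zero =>
    rcases k with _ | k <;>
      simp [prefixMoment_zero, Nat.choose_eq_zero_of_lt, Nat.cast_add_one_ne_zero]
  | succ n ih =>
    rw [prefixMoment_succ _ _ (Int.natCast_nonneg k)]
    rcases k with _ | k
    -- `μ n (-1) = 0`: its role is played by the symmetry `C(2n+1, n) = C(2n+1, n+1)`.
    · have h0 := ih 0
      have h1 := ih 1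
      have hsymm := Nat.choose_symm_half n
      have hmid := Nat.choose_succ_succ' (2 * n) n
      have hhigh := Nat.choose_succ_succ' (2 * n) (n + 1)
      rw [Nat.cast_zero, zero_sub, prefixMoment_of_neg _ _ (show (-1 : ℤ) < 0 by norm_num)]
      simp only [Nat.cast_zero, Nat.cast_one, Int.toNat_zero, if_true, zero_add, one_mul,
        add_zero] at h0 h1 ⊢
      rw [show 2 * (n + 1) = 2 * n + 1 + 1 by ring, Nat.choose_succ_succ' (2 * n + 1) (n + 1),
        Nat.choose_succ_succ' (2 * n + 1) n]
      omega
    · have h0 := ih k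
      have h1 := ih (k + 1)
      have h2 := ih (k + 2)
      have hlow := Nat.choose_add_two_add_two (2 * n) (n + k)
      have hhigh := Nat.choose_add_two_add_two (2 * n) (n + k + 1)
      rw [Int.toNat_natCast, if_neg k.succ_ne_zero]
      push_cast at h1 h2 ⊢
      ring_nf at h0 h1 h2 hlow hhigh ⊢
      omega

/-- Weighted Motzkin paths of length `n` with horizontal weights `b₀ = 1`,
`bₖ = 2` for `k ≥ 1`, and down-step weights `λₖ = 1`, have total weight the
Catalan number `Cₙ`. -/
theorem motzkin_weighted_eq_catalan (n : ℕ) :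
    moment (fun k => if k = 0 then 1 else 2) (fun _ => 1) n = catalan n := by
  have hmoment := prefixMoment_add_choose n 0
  have hcatalan := catalan_add_choose_succ n
  rw [Nat.cast_zero, add_zero] at hmoment
  rw [moment_eq_prefixMoment_zero]
  omega
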